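/- arXiv:2002.02803 — 2 statements merged into one kernel-verified Lean document; each statement's English description precedes it below -/
import Mathlib

section
/- Let $(A,N,C)$ be a positive $C^2$ steady state of the algal model (as in the full system with $p_n,p_c\in[0,1]$ and positive parameters), satisfying the three integral identities $\int_0^L(rf(N)g(C)-(m+l/Q))A\,dz=0$, $\alpha(N^0-N(L))=\int_0^L c_n(rf(N)g(C)-p_nm)A\,dz$, and $\beta(C^0-C(0))=\int_0^L(rf(N)g(C)-p_cl/Q)A\,dz$. Then $\int_0^L A(z)\,dz < \dfrac{\alpha Q N^0}{c_n l}$. -/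
/-!
Write `I = ∫ A` and `J = ∫ r f(N) g(C) A`. The growth identity gives `J = (m + l/Q) I`, and
substituting this into the nutrient budget gives
`α (N⁰ - N(L)) = c_n (l/Q) I + c_n (1 - p_n) m I ≥ c_n (l/Q) I`, since `p_n ≤ 1` and `I ≥ 0`.
As `N(L) > 0`, the left side is below `α N⁰`.
-/

open MeasureTheory Set

lemma ContinuousOn.comp_saturation {f N : ℝ → ℝ} {γ : ℝ} {s : Set ℝ} (hγ : 0 < γ)
    (hf : ∀ x, f x = x / (γ + x)) (hN : ContinuousOn N s) (hNpos : ∀ z ∈ s, 0 < N z) :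
    ContinuousOn (fun z => f (N z)) s := by
  simp only [hf]
  exact hN.div (continuousOn_const.add hN) fun z hz => (add_pos hγ (hNpos z hz)).ne'

lemma intervalIntegral.integral_sub_const_mul_eq {φ A : ℝ → ℝ} {a b c : ℝ}
    (hA : IntervalIntegrable A volume a b)
    (hφA : IntervalIntegrable (fun z => φ z * A z) volume a b) :
    ∫ z in a..b, (φ z - c) * A z = (∫ z in a..b, φ z * A z) - c * ∫ z in a..b, A z := by
  simp only [sub_mul]
  rw [intervalIntegral.integral_sub hφA (hA.const_mul c), intervalIntegral.integral_const_mul]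

lemma lt_div_of_growth_balance_of_uptake {I J m l Q cn alpha N0 NL pn : ℝ}
    (hI : 0 ≤ I) (hm : 0 ≤ m) (hpn : pn ≤ 1) (hl : 0 < l) (hQ : 0 < Q) (hcn : 0 < cn)
    (halpha : 0 < alpha) (hNL : 0 < NL)
    (hgrowth : J = (m + l / Q) * I) (huptake : alpha * (N0 - NL) = cn * (J - pn * m * I)) :
    I < alpha * Q * N0 / (cn * l) := by
  have hexcess : 0 ≤ cn * ((1 - pn) * m * I) :=
    mul_nonneg hcn.le (mul_nonneg (mul_nonneg (sub_nonneg.2 hpn) hm) hI)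
  have hbudget : I * (cn * l) = Q * (alpha * (N0 - NL) - cn * ((1 - pn) * m * I)) := by
    rw [huptake, hgrowth]
    field_simp
    ring
  rw [lt_div_iff₀ (mul_pos hcn hl), hbudget]
  nlinarith [mul_pos hQ halpha, mul_pos (mul_pos hQ halpha) hNL, mul_nonneg hQ.le hexcess]

theorem stmt13_general (r m l Q cn alpha N0 gn gc L pn : ℝ)
    (hm : 0 < m) (hl : 0 < l) (hQ : 0 < Q) (hcn : 0 < cn)
    (halpha : 0 < alpha)
    (hgn : 0 < gn) (hgc : 0 < gc) (hL : 0 < L)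
    (hpn : pn ∈ Set.Icc (0:ℝ) 1)
    (A N C : ℝ → ℝ)
    (hAc : ContinuousOn A (Set.Icc 0 L)) (hNc : ContinuousOn N (Set.Icc 0 L))
    (hCc : ContinuousOn C (Set.Icc 0 L))
    (hApos : ∀ z ∈ Set.Icc (0:ℝ) L, 0 < A z)
    (hNpos : ∀ z ∈ Set.Icc (0:ℝ) L, 0 < N z)
    (hCpos : ∀ z ∈ Set.Icc (0:ℝ) L, 0 < C z)
    (f g : ℝ → ℝ) (hf : ∀ x, f x = x / (gn + x)) (hg : ∀ x, g x = x / (gc + x))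
    (hI1 : (∫ z in (0:ℝ)..L, (r * f (N z) * g (C z) - (m + l / Q)) * A z) = 0)
    (hI2 : alpha * (N0 - N L) =
      ∫ z in (0:ℝ)..L, cn * (r * f (N z) * g (C z) - pn * m) * A z) :
    (∫ z in (0:ℝ)..L, A z) < alpha * Q * N0 / (cn * l) := by
  set φ : ℝ → ℝ := fun z => r * f (N z) * g (C z)
  have hIcc : uIcc 0 L = Icc 0 L := uIcc_of_le hL.le
  have hφ : ContinuousOn φ (Icc 0 L) :=
    (continuousOn_const.mul (hNc.comp_saturation hgn hf hNpos)).mul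
      (hCc.comp_saturation hgc hg hCpos)
  have hA : IntervalIntegrable A volume 0 L := (hIcc ▸ hAc).intervalIntegrable
  have hφA : IntervalIntegrable (fun z => φ z * A z) volume 0 L :=
    (hIcc ▸ hφ.mul hAc).intervalIntegrable
  have hgrowth := intervalIntegral.integral_sub_const_mul_eq (c := m + l / Q) hA hφA
  have huptake := intervalIntegral.integral_sub_const_mul_eq (c := pn * m) hA hφA
  simp only [mul_assoc cn, intervalIntegral.integral_const_mul] at hI2
  refine lt_div_of_growth_balance_of_uptake
    (intervalIntegral.integral_nonneg hL.le fun z hz => (hApos z hz).le) hm.le hpn.2 hl hQ hcn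
    halpha (hNpos L ⟨hL.le, le_rfl⟩) (J := ∫ z in (0:ℝ)..L, φ z * A z) ?_ (hI2.trans ?_)
  · linarith [hgrowth.symm.trans hI1]
  · rw [← huptake]

theorem stmt13 (r m l Q cn alpha beta N0 C0 gn gc L pn pc : ℝ)
    (hr : 0 < r) (hm : 0 < m) (hl : 0 < l) (hQ : 0 < Q) (hcn : 0 < cn)
    (halpha : 0 < alpha) (hbeta : 0 < beta) (hN0 : 0 < N0) (hC0 : 0 < C0)
    (hgn : 0 < gn) (hgc : 0 < gc) (hL : 0 < L)
    (hpn : pn ∈ Set.Icc (0:ℝ) 1) (hpc : pc ∈ Set.Icc (0:ℝ) 1)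
    (A N C : ℝ → ℝ)
    (hAc : ContinuousOn A (Set.Icc 0 L)) (hNc : ContinuousOn N (Set.Icc 0 L))
    (hCc : ContinuousOn C (Set.Icc 0 L))
    (hApos : ∀ z ∈ Set.Icc (0:ℝ) L, 0 < A z)
    (hNpos : ∀ z ∈ Set.Icc (0:ℝ) L, 0 < N z)
    (hCpos : ∀ z ∈ Set.Icc (0:ℝ) L, 0 < C z)
    (f g : ℝ → ℝ) (hf : ∀ x, f x = x / (gn + x)) (hg : ∀ x, g x = x / (gc + x))
    (hI1 : (∫ z in (0:ℝ)..L, (r * f (N z) * g (C z) - (m + l / Q)) * A z) = 0)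
    (hI2 : alpha * (N0 - N L) =
      ∫ z in (0:ℝ)..L, cn * (r * f (N z) * g (C z) - pn * m) * A z)
    (hI3 : beta * (C0 - C 0) =
      ∫ z in (0:ℝ)..L, (r * f (N z) * g (C z) - pc * l / Q) * A z) :
    (∫ z in (0:ℝ)..L, A z) < alpha * Q * N0 / (cn * l) :=
  stmt13_general r m l Q cn alpha N0 gn gc L pn hm hl hQ hcn halpha hgn hgc hL hpn A N C hAc hNc hCc
    hApos hNpos hCpos f g hf hg hI1 hI2
end

section
/- Let $(A,N,C)$ be a positive $C^2$ steady state of the algal model with positive parameters, $p_n,p_c\in[0,1]$, $m<m^*:=r-l/Q$, satisfying the steady-state equations and boundary conditions, and suppose the total biomass bound $\int_0^L A\,dz < \alpha QN^0/(c_n l)$ and $0<f(N)g(C)<1$ hold. Then for every $z\in[0,L]$: $|D_nN'(z)| \le \alpha(r+p_nm^*)QN^0/l$ and $N(z) < N^0 + \alpha(r+p_nm^*)LQN^0/(D_n l)$. -/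
/-!
Integrating the nutrient equation from the no-flux end `z = 0` writes `Dₙ N'(z)` as the integral of
`cₙ (r f g - pₙ m) A`, whose integrand is at most `cₙ (r + pₙ m*) A` in absolute value since
`0 < r f g < r`; the biomass bound then controls the flux. Integrating the algae equation, whose
boundary conditions are zero-flux at both ends, shows that uptake balances losses,
`∫ r f g A = (m + l/Q) ∫ A`, so the boundary flux `Dₙ N'(L) = α (N⁰ - N(L))` is positive. The
pointwise bound follows from `N(L) < N⁰` and the mean value inequality.
-/

open Set MeasureTheory intervalIntegral

lemma integral_eq_sub_of_hasDerivAt_of_eqOn_Ioo {u u' h : ℝ → ℝ} {a b : ℝ} (hab : a ≤ b)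
    (hu : ∀ x ∈ Icc a b, HasDerivAt u (u' x) x) (heq : EqOn u' h (Ioo a b))
    (hh : ContinuousOn h (Icc a b)) : ∫ x in a..b, h x = u b - u a :=
  integral_eq_sub_of_hasDerivAt_of_le hab (HasDerivAt.continuousOn hu)
    (fun x hx => heq hx ▸ hu x (Ioo_subset_Icc_self hx)) (hh.intervalIntegrable_of_Icc hab)

lemma mul_deriv_eq_integral_of_ode {D L : ℝ} {u' u'' h : ℝ → ℝ}
    (hu : ∀ x ∈ Icc 0 L, HasDerivAt u' (u'' x) x) (hode : ∀ x ∈ Ioo 0 L, D * u'' x = h x)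
    (hh : ContinuousOn h (Icc 0 L)) (h0 : u' 0 = 0) :
    ∀ z ∈ Icc 0 L, D * u' z = ∫ t in (0:ℝ)..z, h t := fun z hz => by
  have hsub : Icc 0 z ⊆ Icc 0 L := Icc_subset_Icc le_rfl hz.2
  rw [integral_eq_sub_of_hasDerivAt_of_eqOn_Ioo hz.1 (fun t ht => (hu t (hsub ht)).const_mul D)
    (fun t ht => hode t ⟨ht.1, ht.2.trans_le hz.2⟩) (hh.mono hsub), h0, mul_zero, sub_zero]

lemma abs_integral_le_mul_integral_of_abs_le {h A : ℝ → ℝ} {a b c z : ℝ} (hz : z ∈ Icc a b)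
    (hh : ContinuousOn h (Icc a b)) (hA : ContinuousOn A (Icc a b))
    (hle : ∀ t ∈ Icc a b, |h t| ≤ c * A t) :
    |∫ t in a..z, h t| ≤ c * ∫ t in a..b, A t := by
  obtain ⟨haz, hzb⟩ := hz
  have hcA : ContinuousOn (fun t => c * A t) (Icc a b) := continuousOn_const.mul hA
  have hsub : Icc a z ⊆ Icc a b := Icc_subset_Icc le_rfl hzb
  calc |∫ t in a..z, h t| ≤ ∫ t in a..z, |h t| := abs_integral_le_integral_abs haz
    _ ≤ ∫ t in a..z, c * A t :=
        integral_mono_on haz ((hh.mono hsub).intervalIntegrable_of_Icc haz).abs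
          ((hcA.mono hsub).intervalIntegrable_of_Icc haz) fun t ht => hle t (hsub ht)
    _ ≤ ∫ t in a..b, c * A t :=
        integral_mono_interval le_rfl haz hzb
          (ae_restrict_of_forall_mem measurableSet_Ioc fun t ht =>
            le_trans (abs_nonneg _) (hle t (Ioc_subset_Icc_self ht)))
          (hcA.intervalIntegrable_of_Icc (haz.trans hzb))
    _ = c * ∫ t in a..b, A t := integral_const_mul c A

lemma div_add_self_mem_Ioo {γ x : ℝ} (hγ : 0 < γ) (hx : 0 < x) : x / (γ + x) ∈ Ioo 0 1 :=
  ⟨by positivity, (div_lt_one (by positivity)).2 (by linarith)⟩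

lemma abs_sub_le_add_of_mem_Icc {x y a b : ℝ} (hx : x ∈ Icc 0 a) (hy : y ∈ Icc 0 b) :
    |x - y| ≤ a + b :=
  abs_le.2 ⟨by linarith [hx.1, hy.2, hx.1.trans hx.2], by linarith [hx.2, hy.1, hy.1.trans hy.2]⟩

lemma mul_div_add_self_mul_div_add_self_mem_Ioo {r γ δ x y : ℝ} (hr : 0 < r) (hγ : 0 < γ)
    (hδ : 0 < δ) (hx : 0 < x) (hy : 0 < y) : r * (x / (γ + x)) * (y / (δ + y)) ∈ Ioo 0 r := by
  obtain ⟨hx0, hx1⟩ := div_add_self_mem_Ioo hγ hx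
  obtain ⟨hy0, hy1⟩ := div_add_self_mem_Ioo hδ hy
  exact ⟨by positivity, (mul_lt_of_lt_one_right (by positivity) hy1).trans
    (mul_lt_of_lt_one_right hr hx1)⟩

lemma ContinuousOn.div_add_self {γ : ℝ} {u : ℝ → ℝ} {s : Set ℝ} (hu : ContinuousOn u s)
    (hγ : 0 < γ) (hpos : ∀ x ∈ s, 0 < u x) : ContinuousOn (fun x => u x / (γ + u x)) s :=
  hu.div (continuousOn_const.add hu) fun x hx => (add_pos hγ (hpos x hx)).ne'

lemma le_add_mul_of_abs_deriv_le {u u' : ℝ → ℝ} {a b c z : ℝ}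
    (hu : ∀ x ∈ Icc a b, HasDerivAt u (u' x) x) (hbound : ∀ x ∈ Icc a b, |u' x| ≤ c)
    (hz : z ∈ Icc a b) : u z ≤ u b + c * (b - a) := by
  have hmvt := (convex_Icc a b).norm_image_sub_le_of_norm_hasDerivWithin_le
    (fun x hx => (hu x hx).hasDerivWithinAt) hbound hz ⟨hz.1.trans hz.2, le_rfl⟩
  rw [Real.norm_eq_abs, Real.norm_eq_abs, abs_of_nonneg (sub_nonneg.2 hz.2), abs_le] at hmvt
  have hc : 0 ≤ c := (abs_nonneg _).trans (hbound z hz)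
  nlinarith [hmvt.1, hz.1]

lemma integral_mul_eq_zero_of_zero_flux {D s L : ℝ} {A A' A'' G : ℝ → ℝ} (hL : 0 ≤ L)
    (hA1 : ∀ z ∈ Icc 0 L, HasDerivAt A (A' z) z) (hA2 : ∀ z ∈ Icc 0 L, HasDerivAt A' (A'' z) z)
    (hG : ContinuousOn G (Icc 0 L))
    (hode : ∀ z ∈ Ioo 0 L, D * A'' z - s * A' z + G z * A z = 0)
    (hb0 : D * A' 0 - s * A 0 = 0) (hbL : D * A' L - s * A L = 0) :
    ∫ z in (0:ℝ)..L, G z * A z = 0 := by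
  have hu : ∀ z ∈ Icc 0 L,
      HasDerivAt (fun t => s * A t - D * A' t) (s * A' z - D * A'' z) z := fun z hz =>
    ((hA1 z hz).const_mul s).sub ((hA2 z hz).const_mul D)
  rw [integral_eq_sub_of_hasDerivAt_of_eqOn_Ioo (h := fun z => G z * A z) hL hu
    (fun z hz => by linarith [hode z hz]) (hG.mul (HasDerivAt.continuousOn hA1))]
  linarith

lemma integral_mul_sub_mul_eq_of_integral_sub_mul_eq_zero {G A : ℝ → ℝ} {a b k c d : ℝ}
    (hab : a ≤ b) (hG : ContinuousOn G (Icc a b)) (hA : ContinuousOn A (Icc a b))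
    (h0 : ∫ t in a..b, (G t - c) * A t = 0) :
    ∫ t in a..b, k * (G t - d) * A t = k * (c - d) * ∫ t in a..b, A t := by
  have hsplit : ∀ t, k * (G t - d) * A t = k * ((G t - c) * A t) + k * (c - d) * A t :=
    fun t => by ring
  simp_rw [hsplit]
  rw [intervalIntegral.integral_add, intervalIntegral.integral_const_mul,
    intervalIntegral.integral_const_mul, h0, mul_zero, zero_add]
  · exact (((hG.sub continuousOn_const).mul hA).intervalIntegrable_of_Icc hab).const_mul _
  · exact (hA.intervalIntegrable_of_Icc hab).const_mul _

theorem stmt16_general (Da Dn r m l Q cn alpha N0 gn gc L s pn : ℝ)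
    (hDn : 0 < Dn) (hr : 0 < r) (hm : 0 < m)
    (hl : 0 < l) (hQ : 0 < Q) (hcn : 0 < cn) (halpha : 0 < alpha)
    (hN0 : 0 < N0) (hgn : 0 < gn) (hgc : 0 < gc) (hL : 0 < L)
    (hpn : pn ∈ Set.Icc (0:ℝ) 1)
    (hmstar : m < r - l / Q)
    (A A' A'' N N' N'' C C' : ℝ → ℝ)
    (hApos : ∀ z ∈ Set.Icc (0:ℝ) L, 0 < A z)
    (hNpos : ∀ z ∈ Set.Icc (0:ℝ) L, 0 < N z)
    (hCpos : ∀ z ∈ Set.Icc (0:ℝ) L, 0 < C z)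
    (hA1 : ∀ z ∈ Set.Icc (0:ℝ) L, HasDerivAt A (A' z) z)
    (hA2 : ∀ z ∈ Set.Icc (0:ℝ) L, HasDerivAt A' (A'' z) z)
    (hN1 : ∀ z ∈ Set.Icc (0:ℝ) L, HasDerivAt N (N' z) z)
    (hN2 : ∀ z ∈ Set.Icc (0:ℝ) L, HasDerivAt N' (N'' z) z)
    (hC1 : ∀ z ∈ Set.Icc (0:ℝ) L, HasDerivAt C (C' z) z)
    (f g : ℝ → ℝ) (hf : ∀ x, f x = x / (gn + x)) (hg : ∀ x, g x = x / (gc + x))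
    (hodeA : ∀ z ∈ Set.Ioo (0:ℝ) L,
      Da * A'' z - s * A' z + (r * f (N z) * g (C z) - (m + l / Q)) * A z = 0)
    (hodeN : ∀ z ∈ Set.Ioo (0:ℝ) L,
      Dn * N'' z + cn * (pn * m - r * f (N z) * g (C z)) * A z = 0)
    (hbA0 : Da * A' 0 - s * A 0 = 0) (hbAL : Da * A' L - s * A L = 0)
    (hbN0 : N' 0 = 0) (hbNL : Dn * N' L = alpha * (N0 - N L))
    (hbiomass : (∫ z in (0:ℝ)..L, A z) < alpha * Q * N0 / (cn * l)) :
    ∀ z ∈ Set.Icc (0:ℝ) L,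
      |Dn * N' z| ≤ alpha * (r + pn * (r - l / Q)) * Q * N0 / l ∧
      N z < N0 + alpha * (r + pn * (r - l / Q)) * L * Q * N0 / (Dn * l) := by
  obtain ⟨hpn0, hpn1⟩ := hpn
  have hm' : 0 < r - l / Q := hm.trans hmstar
  set K := r + pn * (r - l / Q)
  set F : ℝ → ℝ := fun t => r * f (N t) * g (C t) with hF
  have hFr : ∀ t ∈ Icc 0 L, F t ∈ Ioo 0 r := fun t ht => by
    simpa only [hF, hf, hg] using
      mul_div_add_self_mul_div_add_self_mem_Ioo hr hgn hgc (hNpos t ht) (hCpos t ht)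
  have contA : ContinuousOn A (Icc 0 L) := HasDerivAt.continuousOn hA1
  have contF : ContinuousOn F (Icc 0 L) := by
    simp only [hF, hf, hg]
    exact (continuousOn_const.mul ((HasDerivAt.continuousOn hN1).div_add_self hgn hNpos)).mul
      ((HasDerivAt.continuousOn hC1).div_add_self hgc hCpos)
  have contUptake : ContinuousOn (fun t => cn * (F t - pn * m) * A t) (Icc 0 L) :=
    (continuousOn_const.mul (contF.sub continuousOn_const)).mul contA
  have flux := mul_deriv_eq_integral_of_ode (D := Dn) hN2
    (fun t ht => by linarith [hodeN t ht]) contUptake hbN0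
  have hflux : ∀ z ∈ Icc 0 L, |Dn * N' z| < alpha * K * Q * N0 / l := fun z hz =>
    calc |Dn * N' z| ≤ cn * K * ∫ t in (0:ℝ)..L, A t := by
          refine flux z hz ▸ abs_integral_le_mul_integral_of_abs_le hz contUptake contA
            fun t ht => ?_
          have hA := (hApos t ht).le
          rw [abs_mul, abs_mul, abs_of_pos hcn, abs_of_nonneg hA]
          gcongr
          exact abs_sub_le_add_of_mem_Icc (Ioo_subset_Icc_self (hFr t ht))
            ⟨by positivity, by gcongr⟩
      _ < cn * K * (alpha * Q * N0 / (cn * l)) := by gcongr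
      _ = alpha * K * Q * N0 / l := by field_simp
  have hNL : N L < N0 := by
    have hbalance : ∫ t in (0:ℝ)..L, (F t - (m + l / Q)) * A t = 0 :=
      integral_mul_eq_zero_of_zero_flux hL.le hA1 hA2 (contF.sub continuousOn_const) hodeA hbA0 hbAL
    have hA : 0 < ∫ t in (0:ℝ)..L, A t :=
      intervalIntegral_pos_of_pos_on (contA.intervalIntegrable_of_Icc hL.le)
        (fun t ht => hApos t (Ioo_subset_Icc_self ht)) hL
    have hloss : 0 < m + l / Q - pn * m := by nlinarith [div_pos hl hQ]
    have hout := (flux L ⟨hL.le, le_rfl⟩).trans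
      (integral_mul_sub_mul_eq_of_integral_sub_mul_eq_zero hL.le contF contA hbalance)
    nlinarith [mul_pos (mul_pos hcn hloss) hA]
  intro z hz
  refine ⟨(hflux z hz).le, ?_⟩
  have hN' : ∀ t ∈ Icc 0 L, |N' t| ≤ alpha * K * Q * N0 / l / Dn := fun t ht => by
    rw [le_div_iff₀ hDn, ← abs_of_pos hDn, ← abs_mul, mul_comm]
    exact (hflux t ht).le
  have : alpha * K * Q * N0 / l / Dn * (L - 0) = alpha * K * L * Q * N0 / (Dn * l) := by
    rw [sub_zero]; field_simp
  linarith [le_add_mul_of_abs_deriv_le hN1 hN' hz]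

theorem stmt16 (Da Dn Dc r m l Q cn alpha beta N0 C0 gn gc L s pn pc : ℝ)
    (hDa : 0 < Da) (hDn : 0 < Dn) (hDc : 0 < Dc) (hr : 0 < r) (hm : 0 < m)
    (hl : 0 < l) (hQ : 0 < Q) (hcn : 0 < cn) (halpha : 0 < alpha) (hbeta : 0 < beta)
    (hN0 : 0 < N0) (hC0 : 0 < C0) (hgn : 0 < gn) (hgc : 0 < gc) (hL : 0 < L)
    (hpn : pn ∈ Set.Icc (0:ℝ) 1) (hpc : pc ∈ Set.Icc (0:ℝ) 1)
    (hmstar : m < r - l / Q)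
    (A A' A'' N N' N'' C C' C'' : ℝ → ℝ)
    (hApos : ∀ z ∈ Set.Icc (0:ℝ) L, 0 < A z)
    (hNpos : ∀ z ∈ Set.Icc (0:ℝ) L, 0 < N z)
    (hCpos : ∀ z ∈ Set.Icc (0:ℝ) L, 0 < C z)
    (hA1 : ∀ z ∈ Set.Icc (0:ℝ) L, HasDerivAt A (A' z) z)
    (hA2 : ∀ z ∈ Set.Icc (0:ℝ) L, HasDerivAt A' (A'' z) z)
    (hN1 : ∀ z ∈ Set.Icc (0:ℝ) L, HasDerivAt N (N' z) z)
    (hN2 : ∀ z ∈ Set.Icc (0:ℝ) L, HasDerivAt N' (N'' z) z)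
    (hC1 : ∀ z ∈ Set.Icc (0:ℝ) L, HasDerivAt C (C' z) z)
    (hC2 : ∀ z ∈ Set.Icc (0:ℝ) L, HasDerivAt C' (C'' z) z)
    (f g : ℝ → ℝ) (hf : ∀ x, f x = x / (gn + x)) (hg : ∀ x, g x = x / (gc + x))
    (hodeA : ∀ z ∈ Set.Ioo (0:ℝ) L,
      Da * A'' z - s * A' z + (r * f (N z) * g (C z) - (m + l / Q)) * A z = 0)
    (hodeN : ∀ z ∈ Set.Ioo (0:ℝ) L,
      Dn * N'' z + cn * (pn * m - r * f (N z) * g (C z)) * A z = 0)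
    (hodeC : ∀ z ∈ Set.Ioo (0:ℝ) L,
      Dc * C'' z + (pc * l / Q - r * f (N z) * g (C z)) * A z = 0)
    (hbA0 : Da * A' 0 - s * A 0 = 0) (hbAL : Da * A' L - s * A L = 0)
    (hbN0 : N' 0 = 0) (hbNL : Dn * N' L = alpha * (N0 - N L))
    (hbC0 : Dc * C' 0 = beta * (C 0 - C0)) (hbCL : C' L = 0)
    (hbiomass : (∫ z in (0:ℝ)..L, A z) < alpha * Q * N0 / (cn * l)) :
    ∀ z ∈ Set.Icc (0:ℝ) L,
      |Dn * N' z| ≤ alpha * (r + pn * (r - l / Q)) * Q * N0 / l ∧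
      N z < N0 + alpha * (r + pn * (r - l / Q)) * L * Q * N0 / (Dn * l) :=
  stmt16_general Da Dn r m l Q cn alpha N0 gn gc L s pn hDn hr hm hl hQ hcn halpha hN0 hgn hgc hL
    hpn hmstar A A' A'' N N' N'' C C' hApos hNpos hCpos hA1 hA2 hN1 hN2 hC1 f g hf hg hodeA hodeN
    hbA0 hbAL hbN0 hbNL hbiomass
end
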